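/- (Lyapunov lower bound) Suppose φ is α-strongly convex w.r.t. the ℓ_p norm, P is symmetric stochastic irreducible PSD, σ = min{1, n^{2/p−1}}, 0 < ω < 1, 0 < γ < ωασ, and 0 < τ ≤ ρ(ωασ − γ)/(2 − ω). Define V(t) = H(x^t, μ^t) + (ω/(2τ))‖μ⋆ − μ^{t−1}‖₂² + ρ Σ_i B_φ(x_i⋆, x_i^t), where H(x,μ) = L(x,μ) − L(x⋆,μ⋆) − τ‖(Q⊗I_n)x‖₂², Q = I − P, and μ^t = μ^{t−1} + τ(Q⊗I_n)x^t. Under the saddle point conditions, V(t) ≥ ((1−ω)ωασρ + γρ)/((2−ω)ωασ) · Σ_i B_φ(x_i⋆, x_i^t) ≥ 0. -/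

import Mathlib

/-- The `ℓ_p` norm of a vector in `ℝⁿ`. -/
noncomputable def lpNorm {n : ℕ} (p : ENNReal) [Fact (1 ≤ p)]
    (w : Fin n → ℝ) : ℝ :=
  ‖(WithLp.equiv p (Fin n → ℝ)).symm w‖

/-- Euclidean inner product on `ℝⁿ`. -/
def inn {n : ℕ} (u v : Fin n → ℝ) : ℝ := ∑ k, u k * v k

/-- Bregman divergence of `φ` with gradient map `gφ`. -/
noncomputable def bregman {n : ℕ} (φ : (Fin n → ℝ) → ℝ)
    (gφ : (Fin n → ℝ) → (Fin n → ℝ)) (u v : Fin n → ℝ) : ℝ :=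
  φ u - φ v - inn (gφ v) (u - v)

/-- Lagrangian of the consensus problem restricted to `X^m`. -/
noncomputable def lagrangian {m n : ℕ} (f : Fin m → (Fin n → ℝ) → ℝ)
    (P : Matrix (Fin m) (Fin m) ℝ) (x μ : Fin m → (Fin n → ℝ)) : ℝ :=
  ∑ i, f i (x i) + ∑ i, inn (μ i) (x i - ∑ j, P i j • x j)

/-- Squared norm of `(Q ⊗ Iₙ)x` with `Q = I − P`. -/
def qNormSq {m n : ℕ} (P : Matrix (Fin m) (Fin m) ℝ)
    (x : Fin m → (Fin n → ℝ)) : ℝ :=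
  ∑ i, ∑ k, (x i k - (∑ j, P i j • x j) k) ^ 2

/-!
The subgradient condition at the saddle point and the symmetry of `P` bound the Lagrangian gap
below by `⟨μᵗ − μ⋆, Q xᵗ⟩`. The dual update turns this into `τ‖Q xᵗ‖² − ⟨μ⋆ − μᵗ⁻¹, Q xᵗ⟩`, and
Young's inequality absorbs the cross term into the dual distance, so that
`V(t) ≥ ρ B − τ/(2ω) ‖Q xᵗ‖²` with `B = ∑ᵢ B_φ(xᵢ⋆, xᵢᵗ)`. As `P` is doubly stochastic and
positive semidefinite, `0 ≤ Q ≤ I`; since `Q x⋆ = 0` this gives `‖Q xᵗ‖² ≤ ‖xᵗ − x⋆‖₂²`. Strong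
convexity of `φ` and `σ‖·‖₂² ≤ ‖·‖_p²` give `ασ/2 ‖xᵗ − x⋆‖₂² ≤ B`, hence
`V(t) ≥ (ρ − τ/(ωασ)) B`, and the step-size condition on `τ` is what makes `ρ − τ/(ωασ)` dominate
the stated coefficient.
-/

open Finset Matrix

theorem Real.sum_rpow_le_rpow_sum {ι : Type*} (s : Finset ι) {f : ι → ℝ}
    (hf : ∀ i ∈ s, 0 ≤ f i) {r : ℝ} (hr : 1 ≤ r) :
    ∑ i ∈ s, f i ^ r ≤ (∑ i ∈ s, f i) ^ r := by
  classical
  induction s using Finset.induction_on with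
  | empty => simp [Real.zero_rpow (by linarith : r ≠ 0)]
  | insert a s ha ih =>
    rw [sum_insert ha, sum_insert ha]
    rw [forall_mem_insert] at hf
    calc f a ^ r + ∑ i ∈ s, f i ^ r ≤ f a ^ r + (∑ i ∈ s, f i) ^ r := by
          gcongr; exact ih hf.2
      _ ≤ (f a + ∑ i ∈ s, f i) ^ r :=
          Real.add_rpow_le_rpow_add hf.1 (sum_nonneg hf.2) hr

namespace Matrix
variable {ι : Type*} [Fintype ι] [DecidableEq ι] {P : Matrix ι ι ℝ}

theorem mulVec_dotProduct_self_le_of_mem_doublyStochastic (hP : P ∈ doublyStochastic ℝ ι)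
    (v : ι → ℝ) : P *ᵥ v ⬝ᵥ P *ᵥ v ≤ v ⬝ᵥ v := by
  -- Cauchy–Schwarz in each row, then the column sums redistribute the weights
  have hrow (i : ι) : (P *ᵥ v) i ^ 2 ≤ ∑ j, P i j * v j ^ 2 := by
    have := sum_sq_le_sum_mul_sum_of_sq_le_mul univ (r := fun j => P i j * v j)
      (fun j _ => nonneg_of_mem_doublyStochastic hP (i := i) (j := j))
      (fun j _ => mul_nonneg (nonneg_of_mem_doublyStochastic hP) (sq_nonneg (v j)))
      (fun j _ => (by ring : (P i j * v j) ^ 2 = P i j * (P i j * v j ^ 2)).le)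
    simpa [sum_row_of_mem_doublyStochastic hP, mulVec, dotProduct] using this
  calc P *ᵥ v ⬝ᵥ P *ᵥ v = ∑ i, (P *ᵥ v) i ^ 2 := by simp only [dotProduct, sq]
    _ ≤ ∑ i, ∑ j, P i j * v j ^ 2 := sum_le_sum fun i _ => hrow i
    _ = v ⬝ᵥ v := by
      rw [sum_comm]
      simp [← sum_mul, sum_col_of_mem_doublyStochastic hP, dotProduct, sq]

open scoped MatrixOrder in
theorem PosSemidef.mulVec_dotProduct_self_le (hP : P.PosSemidef)
    (hcontr : ∀ w, P *ᵥ w ⬝ᵥ P *ᵥ w ≤ w ⬝ᵥ w) (v : ι → ℝ) :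
    P *ᵥ v ⬝ᵥ P *ᵥ v ≤ v ⬝ᵥ P *ᵥ v := by
  -- with `R = √P`: `‖P v‖² = ⟨R v, P (R v)⟩ ≤ ‖R v‖² = ⟨v, P v⟩`
  set R := CFC.sqrt P
  have hR : Rᵀ = R := (nonneg_iff_posSemidef.mp (CFC.sqrt_nonneg P)).isHermitian
  have hRR : R * R = P := CFC.sqrt_mul_sqrt_self P hP.nonneg
  have hquad (w : ι → ℝ) : R *ᵥ w ⬝ᵥ R *ᵥ w = w ⬝ᵥ P *ᵥ w := by
    rw [dotProduct_mulVec, ← mulVec_transpose, hR, mulVec_mulVec, hRR, dotProduct_comm]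
  have hle (w : ι → ℝ) : w ⬝ᵥ P *ᵥ w ≤ w ⬝ᵥ w := by
    have hcs : (w ⬝ᵥ P *ᵥ w) ^ 2 ≤ (w ⬝ᵥ w) * (P *ᵥ w ⬝ᵥ P *ᵥ w) := by
      simpa only [dotProduct, sq] using sum_mul_sq_le_sq_mul_sq univ w (P *ᵥ w)
    have h0 : 0 ≤ w ⬝ᵥ P *ᵥ w := by simpa using hP.dotProduct_mulVec_nonneg w
    have hw : 0 ≤ w ⬝ᵥ w := sum_nonneg fun i _ => mul_self_nonneg (w i)
    nlinarith [mul_le_mul_of_nonneg_left (hcontr w) hw]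
  calc P *ᵥ v ⬝ᵥ P *ᵥ v = R *ᵥ (R *ᵥ v) ⬝ᵥ R *ᵥ (R *ᵥ v) := by rw [mulVec_mulVec, hRR]
    _ = R *ᵥ v ⬝ᵥ P *ᵥ (R *ᵥ v) := hquad _
    _ ≤ R *ᵥ v ⬝ᵥ R *ᵥ v := hle _
    _ = v ⬝ᵥ P *ᵥ v := hquad v

theorem PosSemidef.sub_mulVec_dotProduct_self_le (hP : P.PosSemidef)
    (hcontr : ∀ w, P *ᵥ w ⬝ᵥ P *ᵥ w ≤ w ⬝ᵥ w) (v : ι → ℝ) :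
    (v - P *ᵥ v) ⬝ᵥ (v - P *ᵥ v) ≤ v ⬝ᵥ v := by
  have h0 : 0 ≤ v ⬝ᵥ P *ᵥ v := by simpa using hP.dotProduct_mulVec_nonneg v
  have hPP := hP.mulVec_dotProduct_self_le hcontr v
  simp only [sub_dotProduct, dotProduct_sub, dotProduct_comm (P *ᵥ v) v] at hPP ⊢
  linarith

end Matrix

theorem inn_eq_dotProduct {n : ℕ} (u v : Fin n → ℝ) : inn u v = u ⬝ᵥ v := rfl

theorem sum_dotProduct_sum_smul {ι κ ν R : Type*} [Fintype ι] [Fintype κ] [Fintype ν]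
    [CommSemiring R] (A : Matrix ι κ R) (u : ι → ν → R) (w : κ → ν → R) :
    ∑ i, u i ⬝ᵥ ∑ j, A i j • w j = ∑ j, (∑ i, A i j • u i) ⬝ᵥ w j := by
  simp only [dotProduct_sum, sum_dotProduct, dotProduct_smul, smul_dotProduct]
  exact sum_comm

theorem sum_dotProduct_sub_smul_comm {ι ν R : Type*} [Fintype ι] [Fintype ν] [CommRing R]
    {P : Matrix ι ι R} (hP : P.IsSymm) (u w : ι → ν → R) :
    ∑ i, u i ⬝ᵥ (w i - ∑ j, P i j • w j) = ∑ i, (u i - ∑ j, P i j • u j) ⬝ᵥ w i := by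
  simp only [dotProduct_sub, sub_dotProduct, sum_sub_distrib, sum_dotProduct_sum_smul,
    hP.apply]

theorem dotProduct_le_young {ν : Type*} [Fintype ν] {a b : ℝ} (ha : 0 < a) (hb : 0 < b)
    (u v : ν → ℝ) : u ⬝ᵥ v ≤ a / (2 * b) * (u ⬝ᵥ u) + b / (2 * a) * (v ⬝ᵥ v) := by
  simp only [dotProduct, mul_sum, ← sum_add_distrib]
  refine sum_le_sum fun k _ => ?_
  have key : a / (2 * b) * (u k * u k) + b / (2 * a) * (v k * v k) - u k * v k
      = (a * u k - b * v k) ^ 2 / (2 * a * b) := by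
    field_simp; ring
  have : 0 ≤ (a * u k - b * v k) ^ 2 / (2 * a * b) := by positivity
  linarith

section lpNorm
variable {n : ℕ} (p : ENNReal) [Fact (1 ≤ p)] (z : Fin n → ℝ)

theorem lpNorm_sq_eq_sum_rpow (hp : p ≠ ⊤) :
    lpNorm p z ^ 2 = (∑ k, |z k| ^ p.toReal) ^ (2 / p.toReal) := by
  have hp0 : 0 < p.toReal := ENNReal.toReal_pos (one_pos.trans_le Fact.out).ne' hp
  rw [lpNorm, PiLp.norm_eq_sum hp0, ← Real.rpow_natCast, ← Real.rpow_mul (by positivity)]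
  simp [Real.norm_eq_abs, div_eq_mul_inv, mul_comm]

theorem sum_sq_le_lpNorm_sq_of_le_two (hp : p ≤ 2) : ∑ k, z k ^ 2 ≤ lpNorm p z ^ 2 := by
  have hpt : p ≠ ⊤ := ne_top_of_le_ne_top (by simp) hp
  have hp0 : 0 < p.toReal := ENNReal.toReal_pos (one_pos.trans_le Fact.out).ne' hpt
  have hp2 : p.toReal ≤ 2 := by simpa using ENNReal.toReal_mono (by simp) hp
  rw [lpNorm_sq_eq_sum_rpow p z hpt]
  convert Real.sum_rpow_le_rpow_sum univ (f := fun k => |z k| ^ p.toReal)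
    (fun k _ => by positivity) ((one_le_div hp0).mpr hp2) using 2 with k
  rw [← Real.rpow_mul (abs_nonneg _), mul_div_cancel₀ _ hp0.ne', Real.rpow_two, sq_abs]

theorem sq_apply_le_lpNorm_sq (k : Fin n) : z k ^ 2 ≤ lpNorm p z ^ 2 := by
  have := PiLp.norm_apply_le ((WithLp.equiv p (Fin n → ℝ)).symm z) k
  rw [← sq_abs, ← Real.norm_eq_abs]
  exact pow_le_pow_left₀ (norm_nonneg _) this 2

theorem sum_sq_le_lpNorm_sq_of_two_le (hp : 2 ≤ p) :
    ∑ k, z k ^ 2 ≤ (n : ℝ) ^ (1 - 2 / p.toReal) * lpNorm p z ^ 2 := by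
  -- for `p = ⊤` the factor is `n ^ (1 - 2 / 0) = n`, as `ENNReal.toReal ⊤ = 0`
  rcases eq_or_ne p ⊤ with rfl | hpt
  · simpa using sum_le_sum fun k (_ : k ∈ univ) => sq_apply_le_lpNorm_sq ⊤ z k
  have hp2 : 2 ≤ p.toReal := by simpa using ENNReal.toReal_mono hpt hp
  have hr : 1 ≤ p.toReal / 2 := by linarith
  have hpow (k : Fin n) : (z k ^ 2) ^ (p.toReal / 2) = |z k| ^ p.toReal := by
    rw [← sq_abs, ← Real.rpow_two, ← Real.rpow_mul (abs_nonneg _)]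
    ring_nf
  have := Real.inner_le_weight_mul_Lp_of_nonneg univ hr (fun _ => 1) (fun k => z k ^ 2)
    (fun _ => zero_le_one) (fun k => sq_nonneg _)
  simpa only [one_mul, sum_const, card_univ, Fintype.card_fin, nsmul_eq_mul, mul_one, inv_div,
    hpow, ← lpNorm_sq_eq_sum_rpow p z hpt] using this

theorem min_one_mul_sum_sq_le_lpNorm_sq :
    min 1 ((n : ℝ) ^ (2 / p.toReal - 1)) * ∑ k, z k ^ 2 ≤ lpNorm p z ^ 2 := by
  rcases le_total p 2 with hp | hp
  · calc _ ≤ 1 * ∑ k, z k ^ 2 := by gcongr; exact min_le_left _ _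
      _ ≤ lpNorm p z ^ 2 := by simpa using sum_sq_le_lpNorm_sq_of_le_two p z hp
  rcases n.eq_zero_or_pos with rfl | hn
  · simpa using sq_nonneg (lpNorm p z)
  have hn : (0 : ℝ) < n := by exact_mod_cast hn
  calc _ ≤ (n : ℝ) ^ (2 / p.toReal - 1) * ∑ k, z k ^ 2 := by gcongr; exact min_le_right _ _
    _ ≤ (n : ℝ) ^ (2 / p.toReal - 1) * ((n : ℝ) ^ (1 - 2 / p.toReal) * lpNorm p z ^ 2) := by
        gcongr; exact sum_sq_le_lpNorm_sq_of_two_le p z hp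
    _ = lpNorm p z ^ 2 := by rw [← mul_assoc, ← Real.rpow_add hn]; simp
end lpNorm

theorem qNormSq_eq_sum_dotProduct {m n : ℕ} (P : Matrix (Fin m) (Fin m) ℝ)
    (x : Fin m → Fin n → ℝ) :
    qNormSq P x = ∑ i, (x i - ∑ j, P i j • x j) ⬝ᵥ (x i - ∑ j, P i j • x j) := by
  simp only [qNormSq, dotProduct, Pi.sub_apply, sq]

section Lyapunov
variable {m n : ℕ} {X : Set (Fin n → ℝ)} {f : Fin m → (Fin n → ℝ) → ℝ}
  {P : Matrix (Fin m) (Fin m) ℝ} {x xs μ μ' μs : Fin m → Fin n → ℝ} {ω τ : ℝ}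

theorem sum_inn_le_lagrangian_sub (hsym : P.IsSymm) (hx : ∀ i, x i ∈ X)
    (hconsensus : ∀ i, ∑ j, P i j • xs j = xs i)
    (hsubgrad : ∀ i, ∀ v ∈ X,
      f i v - f i (xs i) ≥ inn (-μs i + ∑ j, P i j • μs j) (v - xs i)) :
    ∑ i, inn (μ i - μs i) (x i - ∑ j, P i j • x j) ≤
      lagrangian f P x μ - lagrangian f P xs μs := by
  have hxs (i : Fin m) : xs i - ∑ j, P i j • xs j = 0 := by rw [hconsensus, sub_self]
  have hgap : -∑ i, μs i ⬝ᵥ (x i - ∑ j, P i j • x j) ≤ ∑ i, (f i (x i) - f i (xs i)) := by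
    have hdiff (i : Fin m) : x i - ∑ j, P i j • x j
        = (x - xs) i - ∑ j, P i j • (x - xs) j := by
      simp only [Pi.sub_apply, smul_sub, sum_sub_distrib, hconsensus]
      abel
    calc -∑ i, μs i ⬝ᵥ (x i - ∑ j, P i j • x j)
        = ∑ i, (-μs i + ∑ j, P i j • μs j) ⬝ᵥ (x i - xs i) := by
          simp only [hdiff]
          rw [sum_dotProduct_sub_smul_comm hsym, ← sum_neg_distrib]
          refine sum_congr rfl fun i _ => ?_
          rw [← neg_dotProduct, neg_sub', sub_neg_eq_add, Pi.sub_apply]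
      _ ≤ ∑ i, (f i (x i) - f i (xs i)) := sum_le_sum fun i _ => hsubgrad i _ (hx i)
  simp only [lagrangian, inn_eq_dotProduct, hxs, dotProduct_zero, sum_const_zero, add_zero,
    sub_dotProduct, sum_sub_distrib] at hgap ⊢
  linarith

theorem lagrangian_gap_add_dual_ge (hω : 0 < ω) (hτ : 0 < τ) (hsym : P.IsSymm)
    (hx : ∀ i, x i ∈ X) (hconsensus : ∀ i, ∑ j, P i j • xs j = xs i)
    (hsubgrad : ∀ i, ∀ v ∈ X,
      f i v - f i (xs i) ≥ inn (-μs i + ∑ j, P i j • μs j) (v - xs i))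
    (hμ : ∀ i, μ i = μ' i + τ • (x i - ∑ j, P i j • x j)) :
    -(τ / (2 * ω) * qNormSq P x) ≤
      lagrangian f P x μ - lagrangian f P xs μs - τ * qNormSq P x +
        ω / (2 * τ) * ∑ i, ∑ k, (μs i k - μ' i k) ^ 2 := by
  set q := fun i => x i - ∑ j, P i j • x j with hq
  have hgap := sum_inn_le_lagrangian_sub (μ := μ) hsym hx hconsensus hsubgrad
  have hstep : ∑ i, inn (μ i - μs i) (q i) = τ * qNormSq P x - ∑ i, (μs i - μ' i) ⬝ᵥ q i := by
    simp only [inn_eq_dotProduct, hμ, qNormSq_eq_sum_dotProduct, mul_sum, ← sum_sub_distrib]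
    refine sum_congr rfl fun i _ => ?_
    rw [show μ' i + τ • q i - μs i = τ • q i - (μs i - μ' i) by abel, sub_dotProduct,
      smul_dotProduct, smul_eq_mul]
  have hyoung : ∑ i, (μs i - μ' i) ⬝ᵥ q i ≤
      ω / (2 * τ) * ∑ i, ∑ k, (μs i k - μ' i k) ^ 2 + τ / (2 * ω) * qNormSq P x := by
    calc _ ≤ ∑ i, (ω / (2 * τ) * ((μs i - μ' i) ⬝ᵥ (μs i - μ' i)) +
              τ / (2 * ω) * (q i ⬝ᵥ q i)) :=
          sum_le_sum fun i _ => dotProduct_le_young hω hτ _ _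
      _ = _ := by
          simp only [sum_add_distrib, ← mul_sum, qNormSq_eq_sum_dotProduct, dotProduct,
            Pi.sub_apply, sq, hq]
  linarith

theorem qNormSq_le_sum_sq_sub (hP : P ∈ doublyStochastic ℝ (Fin m))
    (hpsd : P.PosSemidef) (hconsensus : ∀ i, ∑ j, P i j • xs j = xs i) (x : Fin m → Fin n → ℝ) :
    qNormSq P x ≤ ∑ i, ∑ k, (x i k - xs i k) ^ 2 := by
  have hswap (g : Fin m → Fin n → ℝ) : ∑ i, ∑ k, g i k = ∑ k, ∑ i, g i k := sum_comm
  rw [qNormSq, hswap, hswap]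
  refine sum_le_sum fun k _ => ?_
  set v : Fin m → ℝ := fun i => x i k - xs i k
  have hcol (i : Fin m) : x i k - (∑ j, P i j • x j) k = (v - P *ᵥ v) i := by
    have := congrFun (hconsensus i) k
    simp only [Finset.sum_apply, Pi.smul_apply, smul_eq_mul] at this ⊢
    simp only [v, Pi.sub_apply, mulVec, dotProduct, mul_sub, sum_sub_distrib, this]
    ring
  simpa only [hcol, dotProduct, sq] using
    hpsd.sub_mulVec_dotProduct_self_le (mulVec_dotProduct_self_le_of_mem_doublyStochastic hP) v

theorem sum_sq_sub_le_sum_bregman {p : ENNReal} [Fact (1 ≤ p)] {φ : (Fin n → ℝ) → ℝ}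
    {gφ : (Fin n → ℝ) → (Fin n → ℝ)} {α : ℝ} (hα : 0 ≤ α)
    (hstrong : ∀ u ∈ X, ∀ v ∈ X, bregman φ gφ u v ≥ α / 2 * lpNorm p (u - v) ^ 2)
    (hx : ∀ i, x i ∈ X) (hxs : ∀ i, xs i ∈ X) :
    α * min 1 ((n : ℝ) ^ (2 / p.toReal - 1)) / 2 * ∑ i, ∑ k, (x i k - xs i k) ^ 2 ≤
      ∑ i, bregman φ gφ (xs i) (x i) := by
  rw [mul_sum]
  refine sum_le_sum fun i _ => ?_
  calc _ = α / 2 * (min 1 ((n : ℝ) ^ (2 / p.toReal - 1)) * ∑ k, (xs i - x i) k ^ 2) := by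
        simp only [Pi.sub_apply, sub_sq_comm (x i _)]; ring
    _ ≤ α / 2 * lpNorm p (xs i - x i) ^ 2 := by
        gcongr; exact min_one_mul_sum_sq_le_lpNorm_sq p _
    _ ≤ _ := hstrong _ (hxs i) _ (hx i)

end Lyapunov

theorem lyapunov_coeff_mul_le {α σ ω γ τ ρ S B : ℝ} (hα : 0 < α) (hσ : 0 < σ) (hω0 : 0 < ω)
    (hω1 : ω < 1) (hτ0 : 0 < τ) (hτ : τ ≤ ρ * (ω * α * σ - γ) / (2 - ω)) (hS : 0 ≤ S)
    (hSB : α * σ / 2 * S ≤ B) :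
    ((1 - ω) * ω * α * σ * ρ + γ * ρ) / ((2 - ω) * ω * α * σ) * B ≤ ρ * B - τ / (2 * ω) * S := by
  have hκ : 0 < ω * α * σ := by positivity
  have h2ω : 0 < 2 - ω := by linarith
  have hB : 0 ≤ B := (by positivity : 0 ≤ α * σ / 2 * S).trans hSB
  have hS' : τ / (2 * ω) * S ≤ τ / (ω * α * σ) * B := by
    calc τ / (2 * ω) * S = τ / (ω * α * σ) * (α * σ / 2 * S) := by field_simp
      _ ≤ τ / (ω * α * σ) * B := by gcongr
  have hcoeff : ((1 - ω) * ω * α * σ * ρ + γ * ρ) / ((2 - ω) * ω * α * σ) ≤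
      ρ - τ / (ω * α * σ) := by
    rw [le_div_iff₀ h2ω] at hτ
    have hexp : (ρ - τ / (ω * α * σ)) * ((2 - ω) * ω * α * σ)
        = ρ * (2 - ω) * (ω * α * σ) - τ * (2 - ω) := by
      field_simp
    rw [div_le_iff₀ (by positivity), hexp]
    nlinarith
  nlinarith [mul_le_mul_of_nonneg_right hcoeff hB]

theorem lyapunov_lower_bound_general {m n : ℕ} (p : ENNReal) [Fact (1 ≤ p)]
    (D X : Set (Fin n → ℝ))
    (φ : (Fin n → ℝ) → ℝ) (gφ : (Fin n → ℝ) → (Fin n → ℝ))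
    (f : Fin m → (Fin n → ℝ) → ℝ)
    (P : Matrix (Fin m) (Fin m) ℝ)
    (hsym : P.IsSymm) (hnn : ∀ i j, 0 ≤ P i j)
    (hrow : ∀ i, ∑ j, P i j = 1) (hpsd : P.PosSemidef)
    (α ω γ τ ρ : ℝ)
    (σ : ℝ) (hσ : σ = min 1 ((n : ℝ) ^ (2 / p.toReal - 1)))
    (hα : 0 < α) (hρ : 0 < ρ) (hω0 : 0 < ω) (hω1 : ω < 1)
    (hγ0 : 0 < γ) (hγ : γ < ω * α * σ)
    (hτ0 : 0 < τ) (hτ : τ ≤ ρ * (ω * α * σ - γ) / (2 - ω))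
    -- `φ` is `α`-strongly convex with respect to the `ℓ_p` norm:
    (hstrong : ∀ u ∈ X, ∀ v ∈ X,
      bregman φ gφ u v ≥ α / 2 * lpNorm p (u - v) ^ 2)
    (xt xs μt μtm1 μs : Fin m → (Fin n → ℝ))
    (hxt : ∀ i, xt i ∈ X ∩ D) (hxs : ∀ i, xs i ∈ X ∩ D)
    -- saddle-point conditions:
    (hconsensus : ∀ i, ∑ j, P i j • xs j = xs i)
    (hsubgrad : ∀ i, ∀ v ∈ X,
      f i v - f i (xs i) ≥ inn (-μs i + ∑ j, P i j • μs j) (v - xs i))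
    -- dual update:
    (hμ : ∀ i, μt i = μtm1 i + τ • (xt i - ∑ j, P i j • xt j)) :
    lagrangian f P xt μt - lagrangian f P xs μs - τ * qNormSq P xt +
        ω / (2 * τ) * ∑ i, ∑ k, (μs i k - μtm1 i k) ^ 2 +
        ρ * ∑ i, bregman φ gφ (xs i) (xt i) ≥
      ((1 - ω) * ω * α * σ * ρ + γ * ρ) / ((2 - ω) * ω * α * σ) *
        ∑ i, bregman φ gφ (xs i) (xt i) ∧
    0 ≤ lagrangian f P xt μt - lagrangian f P xs μs - τ * qNormSq P xt +
        ω / (2 * τ) * ∑ i, ∑ k, (μs i k - μtm1 i k) ^ 2 +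
        ρ * ∑ i, bregman φ gφ (xs i) (xt i) := by
  have hσ0 : 0 < σ := by
    by_contra! h
    nlinarith [mul_pos hω0 hα]
  have hP : P ∈ doublyStochastic ℝ (Fin m) :=
    mem_doublyStochastic_iff_sum.2 ⟨hnn, hrow, fun j => by simpa only [hsym.apply] using hrow j⟩
  have hdual := lagrangian_gap_add_dual_ge hω0 hτ0 hsym (fun i => (hxt i).1) hconsensus
    hsubgrad hμ
  have hprimal : α * σ / 2 * qNormSq P xt ≤ ∑ i, bregman φ gφ (xs i) (xt i) := by
    have := sum_sq_sub_le_sum_bregman hα.le hstrong (fun i => (hxt i).1) (fun i => (hxs i).1)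
    rw [← hσ] at this
    exact (mul_le_mul_of_nonneg_left (qNormSq_le_sum_sq_sub hP hpsd hconsensus xt)
      (by positivity)).trans this
  have hSQ : 0 ≤ qNormSq P xt := by unfold qNormSq; positivity
  have hbound := lyapunov_coeff_mul_le hα hσ0 hω0 hω1 hτ0 hτ hSQ hprimal
  have hc : 0 ≤ ((1 - ω) * ω * α * σ * ρ + γ * ρ) / ((2 - ω) * ω * α * σ) := by
    have : 0 < 1 - ω := by linarith
    have : 0 < 2 - ω := by linarith
    positivity
  have hB : 0 ≤ ∑ i, bregman φ gφ (xs i) (xt i) := (mul_nonneg (by positivity) hSQ).trans hprimal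
  exact ⟨by linarith, by nlinarith [mul_nonneg hc hB]⟩

/-- Lyapunov lower bound (Lemma 3 of the paper): under the parameter
conditions `0 < ω < 1`, `0 < γ < ωασ` and `0 < τ ≤ ρ(ωασ − γ)/(2 − ω)`,
the Lyapunov function `V(t)` is bounded below by a positive multiple of
`∑ᵢ B_φ(xᵢ⋆, xᵢᵗ)`, hence nonnegative. -/
theorem lyapunov_lower_bound {m n : ℕ} (p : ENNReal) [Fact (1 ≤ p)]
    (D X : Set (Fin n → ℝ))
    (hDconv : Convex ℝ D) (hDopen : IsOpen D)
    (hXconv : Convex ℝ X) (hXclosed : IsClosed X) (hXD : X ⊆ closure D)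
    (φ : (Fin n → ℝ) → ℝ) (gφ : (Fin n → ℝ) → (Fin n → ℝ))
    (hφconv : StrictConvexOn ℝ D φ)
    (f : Fin m → (Fin n → ℝ) → ℝ) (hf : ∀ i, ConvexOn ℝ X (f i))
    (P : Matrix (Fin m) (Fin m) ℝ)
    (hsym : P.IsSymm) (hnn : ∀ i j, 0 ≤ P i j)
    (hrow : ∀ i, ∑ j, P i j = 1) (hpsd : P.PosSemidef)
    (hirr : ∀ i j, ∃ k : ℕ, 0 < (P ^ k) i j)
    (α ω γ τ ρ : ℝ)
    (σ : ℝ) (hσ : σ = min 1 ((n : ℝ) ^ (2 / p.toReal - 1)))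
    (hα : 0 < α) (hρ : 0 < ρ) (hω0 : 0 < ω) (hω1 : ω < 1)
    (hγ0 : 0 < γ) (hγ : γ < ω * α * σ)
    (hτ0 : 0 < τ) (hτ : τ ≤ ρ * (ω * α * σ - γ) / (2 - ω))
    -- `φ` is `α`-strongly convex with respect to the `ℓ_p` norm:
    (hstrong : ∀ u ∈ X, ∀ v ∈ X,
      bregman φ gφ u v ≥ α / 2 * lpNorm p (u - v) ^ 2)
    (xt xs μt μtm1 μs : Fin m → (Fin n → ℝ))
    (hxt : ∀ i, xt i ∈ X ∩ D) (hxs : ∀ i, xs i ∈ X ∩ D)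
    -- saddle-point conditions:
    (hconsensus : ∀ i, ∑ j, P i j • xs j = xs i)
    (hsubgrad : ∀ i, ∀ v ∈ X,
      f i v - f i (xs i) ≥ inn (-μs i + ∑ j, P i j • μs j) (v - xs i))
    -- dual update:
    (hμ : ∀ i, μt i = μtm1 i + τ • (xt i - ∑ j, P i j • xt j)) :
    lagrangian f P xt μt - lagrangian f P xs μs - τ * qNormSq P xt +
        ω / (2 * τ) * ∑ i, ∑ k, (μs i k - μtm1 i k) ^ 2 +
        ρ * ∑ i, bregman φ gφ (xs i) (xt i) ≥
      ((1 - ω) * ω * α * σ * ρ + γ * ρ) / ((2 - ω) * ω * α * σ) *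
        ∑ i, bregman φ gφ (xs i) (xt i) ∧
    0 ≤ lagrangian f P xt μt - lagrangian f P xs μs - τ * qNormSq P xt +
        ω / (2 * τ) * ∑ i, ∑ k, (μs i k - μtm1 i k) ^ 2 +
        ρ * ∑ i, bregman φ gφ (xs i) (xt i) :=
  lyapunov_lower_bound_general p D X φ gφ f P hsym hnn hrow hpsd α ω γ τ ρ σ hσ hα hρ hω0 hω1 hγ0 hγ
    hτ0 hτ hstrong xt xs μt μtm1 μs hxt hxs hconsensus hsubgrad hμ
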